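/- Let M^μ_{AB}, Ξ_{AB} be constant real D×D matrices with M^0 invertible, and let E^μ_{AB} be constant symmetric matrices and σ_{AB} a constant symmetric matrix. Suppose that along every smooth solution φ of M^μ ∂_μ φ = -Ξ φ one has ∂_μ(½ E^μ_{AB} φ^A φ^B) = -σ_{AB} φ^A φ^B, and suppose M^0_{AB} = E^0_{AB}. Then M^j_{AB} = E^j_{AB} for j = 1,2,3 and Ξ_{(AB)} = σ_{AB}, where Ξ_{(AB)} denotes the symmetric part of Ξ. -/

import Mathlib

open Matrix

/-- Partial derivative `∂_μ f` on `ℝ^{1+3}` (coordinate `0` is time). -/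
noncomputable def pd (μ : Fin 4) (f : (Fin 4 → ℝ) → ℝ) (x : Fin 4 → ℝ) : ℝ :=
  fderiv ℝ f x (Pi.single μ 1)

/-- The quadratic form `Z^A M_{AB} Z^B`. -/
def quadM {D : ℕ} (M : Matrix (Fin D) (Fin D) ℝ) (Z : Fin D → ℝ) : ℝ :=
  Z ⬝ᵥ M.mulVec Z

section Aux

open NormedSpace

attribute [local instance] Matrix.linftyOpNormedAddCommGroup Matrix.linftyOpNormedRing
  Matrix.linftyOpNormedAlgebra

noncomputable instance auxCompleteSpace {D : ℕ} : CompleteSpace (Matrix (Fin D) (Fin D) ℝ) :=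
  FiniteDimensional.complete ℝ _

variable {D : ℕ}

/-- linear form `y ↦ ∑ j, a j * y j.succ` -/
noncomputable def lmap (a : Fin 3 → ℝ) : (Fin 4 → ℝ) →L[ℝ] ℝ :=
  ∑ j : Fin 3, a j • ContinuousLinearMap.proj (R := ℝ) (φ := fun _ : Fin 4 => ℝ) j.succ

lemma lmap_apply (a : Fin 3 → ℝ) (v : Fin 4 → ℝ) : lmap a v = ∑ j : Fin 3, a j * v j.succ := by
  simp [lmap]

lemma lmap_single_zero (a : Fin 3 → ℝ) : lmap a (Pi.single (0 : Fin 4) 1) = 0 := by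
  rw [lmap_apply]
  refine Finset.sum_eq_zero fun j _ => ?_
  rw [Pi.single_eq_of_ne (Fin.succ_ne_zero j), mul_zero]

lemma lmap_single_succ (a : Fin 3 → ℝ) (j : Fin 3) :
    lmap a (Pi.single (j.succ : Fin 4) 1) = a j := by
  rw [lmap_apply]
  rw [Finset.sum_eq_single j]
  · simp
  · intro k _ hk
    rw [Pi.single_eq_of_ne (fun h => hk (Fin.succ_injective 3 h)), mul_zero]
  · simp

/-- entry-of-mulVec continuous linear map -/
noncomputable def entryCLM (W : Fin D → ℝ) (B : Fin D) : Matrix (Fin D) (Fin D) ℝ →L[ℝ] ℝ :=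
  LinearMap.toContinuousLinearMap
    { toFun := fun N => N.mulVec W B
      map_add' := fun N₁ N₂ => by simp [Matrix.add_mulVec]
      map_smul' := fun c N => by simp [Matrix.smul_mulVec] }

/-- the solution family -/
noncomputable def sol (K : Matrix (Fin D) (Fin D) ℝ) (W : Fin D → ℝ) (a : Fin 3 → ℝ)
    (y : Fin 4 → ℝ) : Fin D → ℝ :=
  fun B => Real.exp (lmap a y) * (exp (y 0 • K)).mulVec W B

lemma sol_zero (K : Matrix (Fin D) (Fin D) ℝ) (W : Fin D → ℝ) (a : Fin 3 → ℝ) :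
    sol K W a 0 = W := by
  funext B
  simp [sol, exp_zero]

lemma contDiff_expK (K : Matrix (Fin D) (Fin D) ℝ) {n : WithTop ℕ∞} :
    ContDiff ℝ n (fun t : ℝ => exp (t • K)) := by
  have h1 : AnalyticOnNhd ℝ (exp : Matrix (Fin D) (Fin D) ℝ → _) Set.univ :=
    fun x _ => exp_analytic (𝕂 := ℝ) x
  exact h1.contDiff.comp (((ContinuousLinearMap.id ℝ ℝ).smulRight K).contDiff)

lemma sol_contDiff (K : Matrix (Fin D) (Fin D) ℝ) (W : Fin D → ℝ) (a : Fin 3 → ℝ) (B : Fin D) :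
    ContDiff ℝ (⊤ : ℕ∞) (fun y => sol K W a y B) := by
  unfold sol
  have h1 : ContDiff ℝ (⊤ : ℕ∞) (fun y : Fin 4 → ℝ => Real.exp (lmap a y)) :=
    Real.contDiff_exp.comp (lmap a).contDiff
  have h2 : ContDiff ℝ (⊤ : ℕ∞) (fun y : Fin 4 → ℝ => (exp (y 0 • K)).mulVec W B) :=
    (entryCLM W B).contDiff.comp ((contDiff_expK K).comp
      ((ContinuousLinearMap.proj (R := ℝ) (φ := fun _ : Fin 4 => ℝ) 0).contDiff))
  exact h1.mul h2

/-- derivative CLM of sol component -/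
noncomputable def solL (K : Matrix (Fin D) (Fin D) ℝ) (W : Fin D → ℝ) (a : Fin 3 → ℝ)
    (x : Fin 4 → ℝ) (B : Fin D) : (Fin 4 → ℝ) →L[ℝ] ℝ :=
  Real.exp (lmap a x) • (((K * exp (x 0 • K)).mulVec W B) •
      ContinuousLinearMap.proj (R := ℝ) (φ := fun _ : Fin 4 => ℝ) 0)
    + ((exp (x 0 • K)).mulVec W B) • (Real.exp (lmap a x) • lmap a)

lemma sol_hasFDerivAt (K : Matrix (Fin D) (Fin D) ℝ) (W : Fin D → ℝ) (a : Fin 3 → ℝ)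
    (x : Fin 4 → ℝ) (B : Fin D) :
    HasFDerivAt (fun y => sol K W a y B) (solL K W a x B) x := by
  have hg : HasFDerivAt (fun y : Fin 4 → ℝ => Real.exp (lmap a y))
      (Real.exp (lmap a x) • lmap a) x :=
    (Real.hasDerivAt_exp (lmap a x)).comp_hasFDerivAt x (lmap a).hasFDerivAt
  have step1 : HasDerivAt (fun t : ℝ => exp (t • K)) (K * exp (x 0 • K)) (x 0) :=
    hasDerivAt_exp_smul_const' K (x 0)
  have step2 : HasDerivAt (fun t : ℝ => (exp (t • K)).mulVec W B)
      ((K * exp (x 0 • K)).mulVec W B) (x 0) :=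
    HasFDerivAt.comp_hasDerivAt (x 0) ((entryCLM W B).hasFDerivAt) step1
  have hh : HasFDerivAt (fun y : Fin 4 → ℝ => (exp (y 0 • K)).mulVec W B)
      (((K * exp (x 0 • K)).mulVec W B) •
        ContinuousLinearMap.proj (R := ℝ) (φ := fun _ : Fin 4 => ℝ) 0) x :=
    by have := step2.comp_hasFDerivAt x
        (ContinuousLinearMap.proj (R := ℝ) (φ := fun _ : Fin 4 => ℝ) 0).hasFDerivAt
       exact this
  exact hg.mul hh

lemma pd_of_hasFDerivAt {f : (Fin 4 → ℝ) → ℝ} {L : (Fin 4 → ℝ) →L[ℝ] ℝ} {x : Fin 4 → ℝ}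
    (h : HasFDerivAt f L x) (μ : Fin 4) : pd μ f x = L (Pi.single μ 1) := by
  rw [pd, h.fderiv]

lemma sol_smul (K : Matrix (Fin D) (Fin D) ℝ) (W : Fin D → ℝ) (a : Fin 3 → ℝ) (x : Fin 4 → ℝ) :
    sol K W a x = Real.exp (lmap a x) • ((exp (x 0 • K)).mulVec W) := rfl

lemma pd_sol_zero (K : Matrix (Fin D) (Fin D) ℝ) (W : Fin D → ℝ) (a : Fin 3 → ℝ)
    (x : Fin 4 → ℝ) (B : Fin D) :
    solL K W a x B (Pi.single (0 : Fin 4) 1) = K.mulVec (sol K W a x) B := by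
  rw [sol_smul]
  simp only [solL, ContinuousLinearMap.add_apply, ContinuousLinearMap.smul_apply,
    ContinuousLinearMap.proj_apply, lmap_single_zero, Pi.single_eq_same,
    Matrix.mulVec_smul, ← Matrix.mulVec_mulVec]
  simp [Matrix.mulVec_smul]

lemma pd_sol_succ (K : Matrix (Fin D) (Fin D) ℝ) (W : Fin D → ℝ) (a : Fin 3 → ℝ)
    (x : Fin 4 → ℝ) (B : Fin D) (j : Fin 3) :
    solL K W a x B (Pi.single (j.succ : Fin 4) 1) = a j * sol K W a x B := by
  simp only [solL, ContinuousLinearMap.add_apply, ContinuousLinearMap.smul_apply,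
    ContinuousLinearMap.proj_apply, lmap_single_succ,
    Pi.single_eq_of_ne (Ne.symm (Fin.succ_ne_zero j))]
  simp [sol]
  ring

lemma quadM_eq (N : Matrix (Fin D) (Fin D) ℝ) (v : Fin D → ℝ) :
    quadM N v = ∑ A, v A * ∑ B, N A B * v B := rfl

lemma symm_dot {N : Matrix (Fin D) (Fin D) ℝ} (hsym : N.IsSymm) (v p : Fin D → ℝ) :
    v ⬝ᵥ N.mulVec p = (N.mulVec v) ⬝ᵥ p := by
  rw [dotProduct_mulVec]
  nth_rewrite 1 [← hsym.eq]
  rw [vecMul_transpose]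

lemma pd_quad (N : Matrix (Fin D) (Fin D) ℝ) (φ : (Fin 4 → ℝ) → Fin D → ℝ)
    (L : Fin D → ((Fin 4 → ℝ) →L[ℝ] ℝ)) (x : Fin 4 → ℝ)
    (hφ : ∀ B, HasFDerivAt (fun y => φ y B) (L B) x) (hsym : N.IsSymm) (μ : Fin 4) :
    pd μ (fun y => (1/2 : ℝ) * quadM N (φ y)) x
      = φ x ⬝ᵥ N.mulVec (fun B => L B (Pi.single μ 1)) := by
  have htot : HasFDerivAt (fun y => (1/2 : ℝ) * quadM N (φ y))
      ((1/2 : ℝ) • ∑ A, (φ x A • (∑ B, N A B • L B) + (∑ B, N A B * φ x B) • L A)) x := by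
    have h : HasFDerivAt (fun y => ∑ A, φ y A * ∑ B, N A B * φ y B)
        (∑ A, (φ x A • (∑ B, N A B • L B) + (∑ B, N A B * φ x B) • L A)) x :=
      HasFDerivAt.fun_sum fun A _ =>
        (hφ A).mul (HasFDerivAt.fun_sum fun B _ => ((hφ B).const_mul (N A B)))
    simpa only [← quadM_eq] using h.const_mul (1/2 : ℝ)
  rw [pd_of_hasFDerivAt htot μ]
  have h2 : (N.mulVec (φ x)) ⬝ᵥ (fun B => L B (Pi.single μ 1))
      = φ x ⬝ᵥ N.mulVec (fun B => L B (Pi.single μ 1)) :=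
    (symm_dot hsym (φ x) _).symm
  have expand : ∑ A, (φ x A * (∑ B, N A B * L B (Pi.single μ 1))
        + (∑ B, N A B * φ x B) * L A (Pi.single μ 1))
      = φ x ⬝ᵥ N.mulVec (fun B => L B (Pi.single μ 1))
        + (N.mulVec (φ x)) ⬝ᵥ (fun B => L B (Pi.single μ 1)) := by
    rw [Finset.sum_add_distrib]; rfl
  simp only [ContinuousLinearMap.smul_apply, ContinuousLinearMap.sum_apply,
    ContinuousLinearMap.add_apply, ContinuousLinearMap.coe_smul', Pi.smul_apply,
    smul_eq_mul]
  rw [expand, h2]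
  ring

lemma sum_mulVec' (c : Fin 3 → ℝ) (N : Fin 3 → Matrix (Fin D) (Fin D) ℝ) (v : Fin D → ℝ) :
    (∑ j : Fin 3, c j • N j).mulVec v = ∑ j : Fin 3, c j • (N j).mulVec v := by
  funext B
  simp only [Matrix.mulVec, dotProduct, Finset.sum_apply, Matrix.sum_apply,
    Matrix.smul_apply, Pi.smul_apply, smul_eq_mul, Finset.sum_mul, Finset.mul_sum]
  rw [Finset.sum_comm]
  simp [mul_assoc]

lemma dot_sum3 (v : Fin D → ℝ) (w : Fin 3 → Fin D → ℝ) :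
    v ⬝ᵥ (∑ j : Fin 3, w j) = ∑ j : Fin 3, v ⬝ᵥ w j := by
  simp only [dotProduct, Finset.sum_apply, Finset.mul_sum]
  exact Finset.sum_comm

lemma mulVec_entry (N : Matrix (Fin D) (Fin D) ℝ) (v : Fin D → ℝ) (A : Fin D) :
    N.mulVec v A = ∑ B, N A B * v B := rfl

end Aux
/-- If the energy law `∂_μ(½E^μ_{AB}φ^Aφ^B) = -σ_{AB}φ^Aφ^B` holds along every smooth
solution of `M^μ∂_μφ = -Ξφ`, with `M⁰` invertible and `M⁰ = E⁰`, then `Mʲ = Eʲ` and the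
symmetric part of `Ξ` equals `σ`. -/
theorem stmt2 {D : ℕ} (M : Fin 4 → Matrix (Fin D) (Fin D) ℝ)
    (Ξ : Matrix (Fin D) (Fin D) ℝ)
    (E : Fin 4 → Matrix (Fin D) (Fin D) ℝ) (σ : Matrix (Fin D) (Fin D) ℝ)
    (hM0 : IsUnit (M 0))
    (hEsym : ∀ μ, (E μ).IsSymm) (hσsym : σ.IsSymm)
    (hM0E0 : M 0 = E 0)
    (hlaw : ∀ φ : (Fin 4 → ℝ) → Fin D → ℝ, ContDiff ℝ (⊤ : ℕ∞) φ →
      (∀ (x : Fin 4 → ℝ) (A : Fin D),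
        ∑ μ : Fin 4, ∑ B : Fin D, M μ A B * pd μ (fun y => φ y B) x =
          -∑ B : Fin D, Ξ A B * φ x B) →
      ∀ x : Fin 4 → ℝ,
        ∑ μ : Fin 4, pd μ (fun y => (1 / 2 : ℝ) * quadM (E μ) (φ y)) x =
          -quadM σ (φ x)) :
    (∀ j : Fin 3, M j.succ = E j.succ) ∧ (1 / 2 : ℝ) • (Ξ + Ξᵀ) = σ := by
  have hdet : IsUnit (M 0).det := (Matrix.isUnit_iff_isUnit_det _).1 hM0
  have hMM : M 0 * (M 0)⁻¹ = 1 := Matrix.mul_nonsing_inv _ hdet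
  have main : ∀ (Z W : Fin D → ℝ) (a : Fin 3 → ℝ),
      -((Z + W) ⬝ᵥ Ξ.mulVec (Z + W)) - ∑ j : Fin 3, a j * ((Z + W) ⬝ᵥ (M j.succ).mulVec W)
        + ∑ j : Fin 3, a j * ((Z + W) ⬝ᵥ (E j.succ).mulVec W)
        = -((Z + W) ⬝ᵥ σ.mulVec (Z + W)) := by
    intro Z W a
    set S : Matrix (Fin D) (Fin D) ℝ := ∑ j : Fin 3, a j • M j.succ with hS
    set K1 : Matrix (Fin D) (Fin D) ℝ := -((M 0)⁻¹ * Ξ) with hK1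
    set K2 : Matrix (Fin D) (Fin D) ℝ := -((M 0)⁻¹ * (Ξ + S)) with hK2
    have hMK1 : M 0 * K1 = -Ξ := by
      rw [hK1, mul_neg, ← mul_assoc, hMM, one_mul]
    have hMK2 : M 0 * K2 = -(Ξ + S) := by
      rw [hK2, mul_neg, ← mul_assoc, hMM, one_mul]
    set φ : (Fin 4 → ℝ) → Fin D → ℝ := fun y B => sol K1 Z 0 y B + sol K2 W a y B with hφdef
    have hL : ∀ (x : Fin 4 → ℝ) (B : Fin D), HasFDerivAt (fun y => φ y B)
        (solL K1 Z 0 x B + solL K2 W a x B) x :=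
      fun x B => (sol_hasFDerivAt K1 Z 0 x B).add (sol_hasFDerivAt K2 W a x B)
    have hsm : ContDiff ℝ (⊤ : ℕ∞) φ :=
      contDiff_pi.2 fun B => (sol_contDiff K1 Z 0 B).add (sol_contDiff K2 W a B)
    have hSv : ∀ v : Fin D → ℝ, S.mulVec v = ∑ j : Fin 3, a j • (M j.succ).mulVec v :=
      fun v => by rw [hS, sum_mulVec']
    have hPDE : ∀ (x : Fin 4 → ℝ) (A : Fin D),
        ∑ μ : Fin 4, ∑ B : Fin D, M μ A B * pd μ (fun y => φ y B) x
          = -∑ B : Fin D, Ξ A B * φ x B := by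
      intro x A
      have pd0 : ∀ B, pd 0 (fun y => φ y B) x
          = (K1.mulVec (sol K1 Z 0 x) + K2.mulVec (sol K2 W a x)) B := fun B => by
        rw [pd_of_hasFDerivAt (hL x B), ContinuousLinearMap.add_apply, pd_sol_zero, pd_sol_zero]
        rfl
      have pdj : ∀ (j : Fin 3) (B : Fin D),
          pd j.succ (fun y => φ y B) x = a j * sol K2 W a x B := fun j B => by
        rw [pd_of_hasFDerivAt (hL x B), ContinuousLinearMap.add_apply, pd_sol_succ, pd_sol_succ]
        simp
      rw [Fin.sum_univ_succ]
      have e1 : ∑ B, M 0 A B * pd 0 (fun y => φ y B) x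
          = ((M 0 * K1).mulVec (sol K1 Z 0 x) + (M 0 * K2).mulVec (sol K2 W a x)) A := by
        simp only [pd0]
        rw [← Matrix.mulVec_mulVec, ← Matrix.mulVec_mulVec, ← Matrix.mulVec_add]
        rfl
      have e2 : ∀ j : Fin 3, ∑ B, M j.succ A B * pd j.succ (fun y => φ y B) x
          = a j * ((M j.succ).mulVec (sol K2 W a x)) A := fun j => by
        simp only [pdj, mulVec_entry, Finset.mul_sum]
        exact Finset.sum_congr rfl fun B _ => by ring
      rw [e1]
      simp only [e2]
      rw [hMK1, hMK2]
      have eR : -∑ B : Fin D, Ξ A B * φ x B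
          = (-(Ξ.mulVec (sol K1 Z 0 x)) + -(Ξ.mulVec (sol K2 W a x))) A := by
        simp only [hφdef, Pi.add_apply, Pi.neg_apply, mulVec_entry]
        rw [← neg_add, ← Finset.sum_add_distrib]
        congr 1
        refine Finset.sum_congr rfl fun B _ => by ring
      rw [eR]
      simp only [Matrix.neg_mulVec, Matrix.add_mulVec, hSv,
        Pi.add_apply, Pi.neg_apply, Finset.sum_apply, Pi.smul_apply, smul_eq_mul]
      ring
    have hen := hlaw φ hsm hPDE 0
    have hev : ∀ μ : Fin 4, pd μ (fun y => (1 / 2 : ℝ) * quadM (E μ) (φ y)) 0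
        = φ 0 ⬝ᵥ (E μ).mulVec
            (fun B => (solL K1 Z 0 0 B + solL K2 W a 0 B) (Pi.single μ 1)) :=
      fun μ => pd_quad (E μ) φ (fun B => solL K1 Z 0 0 B + solL K2 W a 0 B) 0 (hL 0) (hEsym μ) μ
    simp only [hev] at hen
    rw [Fin.sum_univ_succ] at hen
    have hφ0 : φ 0 = Z + W := by
      funext B
      rw [hφdef]
      simp only [Pi.add_apply]
      rw [congrFun (sol_zero K1 Z 0) B, congrFun (sol_zero K2 W a) B]
    have hp0 : (fun B => (solL K1 Z 0 0 B + solL K2 W a 0 B) (Pi.single (0 : Fin 4) 1))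
        = K1.mulVec Z + K2.mulVec W := by
      funext B
      rw [ContinuousLinearMap.add_apply, pd_sol_zero, pd_sol_zero, sol_zero, sol_zero]
      rfl
    have hpj : ∀ j : Fin 3,
        (fun B => (solL K1 Z 0 0 B + solL K2 W a 0 B) (Pi.single (j.succ : Fin 4) 1))
        = a j • W := by
      intro j
      funext B
      rw [ContinuousLinearMap.add_apply, pd_sol_succ, pd_sol_succ, sol_zero, sol_zero]
      simp
    rw [hp0] at hen
    simp only [hpj] at hen
    rw [hφ0, ← hM0E0] at hen
    have hE0 : (M 0).mulVec (K1.mulVec Z + K2.mulVec W)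
        = -(Ξ.mulVec Z) + (-(Ξ.mulVec W) - ∑ j : Fin 3, a j • (M j.succ).mulVec W) := by
      rw [Matrix.mulVec_add, Matrix.mulVec_mulVec, Matrix.mulVec_mulVec, hMK1, hMK2]
      rw [Matrix.neg_mulVec, Matrix.neg_mulVec, Matrix.add_mulVec, hSv]
      rw [neg_add]
      rfl
    rw [hE0] at hen
    have hdot1 : (Z + W) ⬝ᵥ (-(Ξ.mulVec Z) + (-(Ξ.mulVec W) - ∑ j : Fin 3, a j • (M j.succ).mulVec W))
        = -((Z + W) ⬝ᵥ Ξ.mulVec (Z + W)) - ∑ j : Fin 3, a j * ((Z + W) ⬝ᵥ (M j.succ).mulVec W) := by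
      rw [dotProduct_add, dotProduct_sub, dotProduct_neg, dotProduct_neg, dot_sum3,
        Matrix.mulVec_add, dotProduct_add]
      simp only [dotProduct_smul, smul_eq_mul]
      ring
    rw [hdot1] at hen
    simp only [Matrix.mulVec_smul, dotProduct_smul, smul_eq_mul] at hen
    simp only [quadM] at hen
    linarith [hen]
  have quadEq : ∀ V : Fin D → ℝ, V ⬝ᵥ Ξ.mulVec V = V ⬝ᵥ σ.mulVec V := by
    intro V
    have h := main V 0 0
    simp at h
    linarith
  have cross : ∀ (V W : Fin D → ℝ) (j : Fin 3),
      V ⬝ᵥ (E j.succ).mulVec W = V ⬝ᵥ (M j.succ).mulVec W := by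
    intro V W j
    have h := main (V - W) W (Pi.single j 1)
    rw [sub_add_cancel] at h
    simp only [Pi.single_apply, ite_mul, one_mul, zero_mul,
      Finset.sum_ite_eq', Finset.mem_univ, if_true] at h
    have hq := quadEq V
    linarith
  constructor
  · intro j
    ext A B
    have h := cross (Pi.single A 1) (Pi.single B 1) j
    simp only [Matrix.mulVec_single_one, mul_one, single_dotProduct, one_mul, Matrix.col_apply] at h
    exact h.symm
  · ext A B
    have hAB := quadEq (Pi.single A 1 + Pi.single B 1)
    have hA := quadEq (Pi.single A 1)
    have hB := quadEq (Pi.single B 1)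
    simp only [Matrix.mulVec_add, dotProduct_add, add_dotProduct,
      Matrix.mulVec_single_one, mul_one, single_dotProduct, one_mul, Matrix.col_apply] at hAB hA hB
    have hσ : σ B A = σ A B := by
      rw [show σ B A = σᵀ A B from rfl, hσsym.eq]
    have hΞ : Ξᵀ A B = Ξ B A := rfl
    simp only [Matrix.smul_apply, Matrix.add_apply, hΞ, smul_eq_mul]
    linarith
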